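/- arXiv:0804.1886 — 4 statements merged into one kernel-verified Lean document; each statement's English description precedes it below -/
import Mathlib

section
/- Let A be a commutative ring, π ∈ A with π² = π₀, and let R be the n×n matrix, n = 2s + (r-s), given in block form by rows/columns of sizes (s, s, r-s): R = [[0, π₀ I_s, 0], [I_s, 0, 0], [a', πa', -π I_{r-s}]] where a' is an arbitrary (r-s)×s matrix over A. Then the characteristic polynomial of R equals (T - π)^s (T + π)^r in A[T]. -/
open Matrix Polynomial

/-- The matrix `R` in block form with rows/columns of sizes `(s, s, r-s)`:
`R = [[0, π₀ I_s, 0], [I_s, 0, 0], [a', π a', -π I_{r-s}]]` where `π₀ = π²`. -/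
noncomputable def Rmat (A : Type*) [CommRing A] (r s : ℕ) (π : A)
    (a' : Matrix (Fin (r - s)) (Fin s) A) :
    Matrix (Fin s ⊕ (Fin s ⊕ Fin (r - s))) (Fin s ⊕ (Fin s ⊕ Fin (r - s))) A :=
  Matrix.fromBlocks 0 (Matrix.fromCols (π ^ 2 • (1 : Matrix (Fin s) (Fin s) A)) 0)
    (Matrix.fromRows (1 : Matrix (Fin s) (Fin s) A) a')
    (Matrix.fromBlocks 0 0 (π • a') (-(π • (1 : Matrix (Fin (r - s)) (Fin (r - s)) A))))

lemma charmatrix_blockDiagonal_aux {R : Type*} [CommRing R] {m o : Type*} [DecidableEq m]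
    [DecidableEq o] [Fintype m] [Fintype o] (M : o → Matrix m m R) :
    charmatrix (blockDiagonal M) = blockDiagonal fun k => charmatrix (M k) := by
  ext ⟨i, k⟩ ⟨j, l⟩
  by_cases hkl : k = l
  · subst hkl
    by_cases hij : i = j
    · subst hij; simp [blockDiagonal_apply]
    · rw [charmatrix_apply_ne _ _ _ (by simp [hij])]
      simp [blockDiagonal_apply, charmatrix_apply_ne _ _ _ hij]
  · rw [charmatrix_apply_ne _ _ _ (by simp [hkl])]
    simp [blockDiagonal_apply, hkl]

/-- The characteristic polynomial of `R` equals `(T - π)^s (T + π)^r`. -/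
theorem stmt4 (A : Type*) [CommRing A] (r s : ℕ) (hrs : s ≤ r) (π π₀ : A)
    (hπ : π ^ 2 = π₀) (a' : Matrix (Fin (r - s)) (Fin s) A) :
    (Rmat A r s π a').charpoly = (X - C π) ^ s * (X + C π) ^ r := by
  classical
  set e := Equiv.sumAssoc (Fin s) (Fin s) (Fin (r - s)) with he
  have hR : Rmat A r s π a' =
      reindex e e (fromBlocks
        (fromBlocks 0 (π ^ 2 • (1 : Matrix (Fin s) (Fin s) A)) 1 0) 0
        (fromCols a' (π • a'))
        (-(π • (1 : Matrix (Fin (r - s)) (Fin (r - s)) A)))) := by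
    ext (i | j | k) (i' | j' | k') <;>
      simp [Rmat, fromBlocks, fromCols, fromRows_apply_inl, fromRows_apply_inr, he, Equiv.sumAssoc]
  rw [hR, charpoly_reindex, charpoly_fromBlocks_zero₁₂]
  -- charpoly of the bottom-right block
  have hD : (-(π • (1 : Matrix (Fin (r - s)) (Fin (r - s)) A))).charpoly
      = (X + C π) ^ (r - s) := by
    have h1 : (-(π • (1 : Matrix (Fin (r - s)) (Fin (r - s)) A)))
        = diagonal (fun _ => -π) := by
      ext i j
      by_cases h : i = j <;> simp [h, one_apply]
    rw [charpoly, h1]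
    have h2 : charmatrix (diagonal fun _ : Fin (r - s) => (-π : A))
        = diagonal fun _ => X + C π := by
      ext i j
      by_cases h : i = j
      · subst h; simp [sub_neg_eq_add]
      · simp [charmatrix_apply_ne _ _ _ h, diagonal_apply_ne _ h]
    rw [h2, det_diagonal]
    simp
  -- charpoly of the top-left block
  have hE : (fromBlocks 0 (π ^ 2 • (1 : Matrix (Fin s) (Fin s) A)) 1 0).charpoly
      = ((X - C π) * (X + C π)) ^ s := by
    set M2 : Matrix (Fin 2) (Fin 2) A := !![0, π ^ 2; 1, 0] with hM2
    set e2 : Fin 2 × Fin s ≃ Fin s ⊕ Fin s :=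
      (Equiv.prodCongr finTwoEquiv (Equiv.refl (Fin s))).trans
        (Equiv.boolProdEquivSum (Fin s)) with he2
    have h1 : (fromBlocks 0 (π ^ 2 • (1 : Matrix (Fin s) (Fin s) A)) 1 0)
        = reindex e2 e2 (blockDiagonal fun _ : Fin s => M2) := by
      ext (i | i) (j | j) <;>
        simp [he2, hM2, blockDiagonal_apply, one_apply, Equiv.boolProdEquivSum,
          finTwoEquiv, eq_comm, -Bool.true_eq] <;>
        aesop
    have h2 : M2.charpoly = (X - C π) * (X + C π) := by
      rw [charpoly, det_fin_two]
      simp [hM2, charmatrix_apply_ne, map_pow]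
      ring
    rw [h1, charpoly_reindex, charpoly, charmatrix_blockDiagonal_aux, det_blockDiagonal]
    rw [charpoly] at h2
    simp [h2]
  rw [hD, hE, mul_pow, mul_assoc, ← pow_add, Nat.add_sub_cancel' hrs]
end

section
/- Let A be a commutative ring, π ∈ A, and let R be the n×n matrix in block form (block sizes s, s, r-s, with s ≤ r, n = r+s): R = [[0, π² I_s, 0], [I_s, 0, 0], [a', π a', -π I_{r-s}]] for an arbitrary (r-s)×s matrix a'. Then every (s+1)×(s+1) minor of R + π I_n vanishes, and every (r+1)×(r+1) minor of R - π I_n vanishes. -/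
/-!
A product `B * C` of an `n × κ` and a `κ × n` matrix with `#κ < #n` has determinant zero:
padding `B` with zero columns and `C` with zero rows writes it as a product of square
matrices, the first of which has a zero column. Hence all minors of size larger than `#κ` of
a matrix factoring through `κ` vanish. `R + π I` factors through `Fin s`, since its second
column block is `π` times its first and its third column block is zero, and `R - π I`
factors through `Fin s ⊕ Fin (r - s)`, since its first row block is `-π` times its second.
-/

open Matrix

namespace Matrix

variable {m n κ R : Type*} [Fintype κ] [CommRing R]

theorem det_mul_eq_zero_of_card_lt [Fintype n] [DecidableEq n] (B : Matrix n κ R)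
    (C : Matrix κ n R) (h : Fintype.card κ < Fintype.card n) : (B * C).det = 0 := by
  let e : κ ⊕ Fin (Fintype.card n - Fintype.card κ) ≃ n :=
    Fintype.equivOfCardEq (by simp only [Fintype.card_sum, Fintype.card_fin]; omega)
  have hpad :
      B * C = (fromCols B 0).submatrix id e.symm * (fromRows C 0).submatrix e.symm id := by
    rw [submatrix_mul_equiv, fromCols_mul_fromRows]
    simp
  rw [hpad, det_mul, det_eq_zero_of_column_eq_zero (e (.inr ⟨0, by omega⟩)) (by simp), zero_mul]

theorem det_submatrix_mul_eq_zero_of_card_lt {k : ℕ} (B : Matrix m κ R) (C : Matrix κ n R)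
    (f : Fin k → m) (g : Fin k → n) (h : Fintype.card κ < k) :
    ((B * C).submatrix f g).det = 0 := by
  rw [submatrix_mul _ _ f id g Function.bijective_id]
  exact det_mul_eq_zero_of_card_lt _ _ (by simpa using h)

end Matrix

section

variable (A : Type*) [CommRing A] (r s : ℕ) (π : A) (a' : Matrix (Fin (r - s)) (Fin s) A)

theorem Rmat_add_smul_one_eq_mul : Rmat A r s π a' + π • 1 =
    fromRows (π • 1) (fromRows 1 a') *
      fromCols 1 (fromCols (π • 1) (0 : Matrix (Fin s) (Fin (r - s)) A)) := by
  simp only [fromRows_mul, mul_fromCols]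
  ext (i | i | k) (j | j | l) <;> simp [Rmat, one_apply, sq]

theorem Rmat_sub_smul_one_eq_mul : Rmat A r s π a' - π • 1 =
    (fromRows (-π • fromCols 1 0) 1 :
      Matrix (Fin s ⊕ (Fin s ⊕ Fin (r - s))) (Fin s ⊕ Fin (r - s)) A) *
      fromBlocks 1 (fromCols (-π • 1) (0 : Matrix (Fin s) (Fin (r - s)) A)) a'
        (fromCols (π • a') (-(2 * π) • 1)) := by
  simp only [fromRows_mul, smul_mul, fromCols_mul_fromBlocks]
  ext (i | i | k) (j | j | l) <;> simp [Rmat, one_apply, sq]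
  split_ifs <;> ring

end

/-- Every `(s+1)×(s+1)` minor of `R + π I` vanishes, and every `(r+1)×(r+1)` minor of
`R - π I` vanishes. -/
theorem stmt5 (A : Type*) [CommRing A] (r s : ℕ) (hrs : s ≤ r) (π : A)
    (a' : Matrix (Fin (r - s)) (Fin s) A) :
    (∀ (f g : Fin (s + 1) → Fin s ⊕ (Fin s ⊕ Fin (r - s))),
      Function.Injective f → Function.Injective g →
      ((Rmat A r s π a' + π • 1).submatrix f g).det = 0) ∧
    (∀ (f g : Fin (r + 1) → Fin s ⊕ (Fin s ⊕ Fin (r - s))),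
      Function.Injective f → Function.Injective g →
      ((Rmat A r s π a' - π • 1).submatrix f g).det = 0) := by
  refine ⟨fun f g _ _ => ?_, fun f g _ _ => ?_⟩
  · rw [Rmat_add_smul_one_eq_mul]
    exact det_submatrix_mul_eq_zero_of_card_lt _ _ f g (by simp)
  · rw [Rmat_sub_smul_one_eq_mul]
    refine det_submatrix_mul_eq_zero_of_card_lt _ _ f g ?_
    simp only [Fintype.card_sum, Fintype.card_fin]
    omega
end

section
/- Let k be a field, m ≥ 1, J = J_{2m} the standard antisymmetric form. If X₁ is a 2m×2m matrix with X₁² = 0 and X₁ + J X₁^t J = 0 (i.e., J X₁ is a symmetric matrix), then the rank of X₁ is even. -/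
/-!
Since `J² = -1`, the hypothesis says `J X₁ = X₁ᵀ J`, so `J X₁` is skew-symmetric, and it has
the rank of `X₁` because `J` is invertible. A skew-symmetric matrix `S` has even rank when
`2 ≠ 0`: the bilinear form `x ⬝ S y` is nondegenerate on a complement of its kernel, and the
Gram matrix of a nondegenerate skew form has `det = -det` in odd dimension.
-/

open Matrix

/-- The standard antisymmetric matrix `J_N` (for `N = 2m`), with `J² = -I`, `Jᵀ = -J`. -/
def Jstd (k : Type*) [Field k] (N : ℕ) : Matrix (Fin N) (Fin N) k :=
  Matrix.of fun i j =>
    if (i : ℕ) + (j : ℕ) = N - 1 then (if (i : ℕ) < N / 2 then 1 else -1) else 0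

theorem Matrix.det_eq_zero_of_transpose_eq_neg {R n : Type*} [CommRing R] [NoZeroDivisors R]
    [Fintype n] [DecidableEq n] (h2 : (2 : R) ≠ 0) {M : Matrix n n R} (hM : Mᵀ = -M)
    (hn : Odd (Fintype.card n)) : M.det = 0 := by
  have h : M.det = -M.det := calc
    M.det = Mᵀ.det := (det_transpose M).symm
    _ = -M.det := by rw [hM, det_neg, hn.neg_one_pow, neg_one_mul]
  exact (mul_eq_zero.mp (by linear_combination h : (2 : R) * M.det = 0)).resolve_left h2

theorem Matrix.ker_toBilin' {R n : Type*} [CommRing R] [Fintype n] [DecidableEq n]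
    (M : Matrix n n R) : LinearMap.ker (toBilin' M) = LinearMap.ker Mᵀ.mulVecLin := by
  ext x
  simp only [LinearMap.mem_ker, mulVecLin_apply, LinearMap.ext_iff, toBilin'_apply',
    LinearMap.zero_apply, dotProduct_mulVec, mulVec_transpose]
  exact ⟨fun h => funext fun j => by simpa using h (Pi.single j 1), fun h y => by simp [h]⟩

open LinearMap (BilinForm)

namespace LinearMap.BilinForm

variable {R M : Type*} [CommRing R] [AddCommGroup M] [Module R M]

theorem isRefl_of_flip_eq_neg {B : BilinForm R M} (hB : B.flip = -B) : B.IsRefl :=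
  fun x y h => by simpa [h] using LinearMap.congr_fun₂ hB x y

theorem IsRefl.nondegenerate_restrict_of_isCompl_ker {B : BilinForm R M} (hB : B.IsRefl)
    {W : Submodule R M} (hW : IsCompl W (LinearMap.ker B)) : (B.restrict W).Nondegenerate := by
  have hB' : (B.restrict W).IsRefl := fun x y => hB x y
  refine (LinearMap.IsRefl.nondegenerate_iff_separatingLeft hB').mpr ?_
  rintro ⟨x, hx⟩ hxW
  suffices x ∈ LinearMap.ker B from Subtype.ext (hW.disjoint.le_bot ⟨hx, this⟩)
  ext y
  obtain ⟨u, hu, v, hv, rfl⟩ : ∃ u ∈ W, ∃ v ∈ LinearMap.ker B, u + v = y := by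
    rw [← Submodule.mem_sup, hW.sup_eq_top]; exact Submodule.mem_top
  have hxv : B x v = 0 := hB v x (LinearMap.congr_fun hv x)
  simp [show B x u = 0 from hxW ⟨u, hu⟩, hxv]

variable {K V : Type*} [Field K] [AddCommGroup V] [Module K V] [FiniteDimensional K V]

theorem even_finrank_of_flip_eq_neg (h2 : (2 : K) ≠ 0) {B : BilinForm K V} (hB : B.flip = -B)
    (hnd : B.Nondegenerate) : Even (Module.finrank K V) := by
  let b := Module.finBasis K V
  have hskew : (toMatrix b B)ᵀ = -toMatrix b B := by
    ext i j
    simpa using LinearMap.congr_fun₂ hB (b i) (b j)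
  by_contra hodd
  refine (nondegenerate_iff_det_ne_zero b).mp hnd (det_eq_zero_of_transpose_eq_neg h2 hskew ?_)
  simpa using hodd

theorem even_finrank_of_isCompl_ker (h2 : (2 : K) ≠ 0) {B : BilinForm K V} (hB : B.flip = -B)
    {W : Submodule K V} (hW : IsCompl W (LinearMap.ker B)) : Even (Module.finrank K W) := by
  refine even_finrank_of_flip_eq_neg h2 ?_
    ((isRefl_of_flip_eq_neg hB).nondegenerate_restrict_of_isCompl_ker hW)
  ext x y
  simpa using LinearMap.congr_fun₂ hB x y

end LinearMap.BilinForm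

theorem Matrix.even_rank_of_transpose_eq_neg {K n : Type*} [Field K] [Fintype n] [DecidableEq n]
    (h2 : (2 : K) ≠ 0) {S : Matrix n n K} (hS : Sᵀ = -S) : Even S.rank := by
  obtain ⟨W, hW⟩ := Submodule.exists_isCompl (LinearMap.ker (toBilin' S))
  have hflip : (toBilin' S).flip = -toBilin' S := by
    ext x y
    simpa using congr_fun₂ hS x y
  have hW_finrank : Module.finrank K W = Sᵀ.rank := by
    have hker := Submodule.finrank_add_eq_of_isCompl hW
    have hrange := LinearMap.finrank_range_add_finrank_ker Sᵀ.mulVecLin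
    rw [ker_toBilin'] at hker
    rw [Matrix.rank]
    omega
  rw [← rank_transpose, ← hW_finrank]
  exact LinearMap.BilinForm.even_finrank_of_isCompl_ker h2 hflip hW.symm

section Jstd

variable (k : Type*) [Field k] (m : ℕ)

theorem Jstd_apply (i j : Fin (2 * m)) :
    Jstd k (2 * m) i j = if j = i.rev then (if (i : ℕ) < m then 1 else -1) else 0 := by
  have hrev : (i : ℕ) + j = 2 * m - 1 ↔ j = i.rev := by rw [Fin.ext_iff, Fin.val_rev]; omega
  simp only [Jstd, of_apply, hrev, Nat.mul_div_cancel_left m two_pos]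

theorem Jstd_transpose : (Jstd k (2 * m))ᵀ = -Jstd k (2 * m) := by
  ext i j
  rw [transpose_apply, neg_apply, Jstd_apply, Jstd_apply]
  by_cases h : j = i.rev
  · rw [if_pos (by rw [h, Fin.rev_rev]), if_pos h, h, Fin.val_rev]
    split_ifs <;> first | omega | simp
  · rw [if_neg fun h' => h (by rw [h', Fin.rev_rev]), if_neg h, neg_zero]

theorem Jstd_mul_self : Jstd k (2 * m) * Jstd k (2 * m) = -1 := by
  ext i j
  simp only [mul_apply, Jstd_apply, ite_mul, zero_mul, Finset.sum_ite_eq', Finset.mem_univ, if_true]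
  rw [Fin.rev_rev, Fin.val_rev, neg_apply, one_apply]
  split_ifs <;> subst_vars <;> first | omega | simp

end Jstd

theorem stmt8_general (k : Type*) [Field k] (hchar : (2 : k) ≠ 0) (m : ℕ)
    (X₁ : Matrix (Fin (2 * m)) (Fin (2 * m)) k)
    (hskew : X₁ + Jstd k (2 * m) * X₁ᵀ * Jstd k (2 * m) = 0) :
    Even X₁.rank := by
  set J := Jstd k (2 * m)
  have hJJ : J * J = -1 := Jstd_mul_self k m
  have hJX : J * X₁ = X₁ᵀ * J := calc
    J * X₁ = J * -(J * X₁ᵀ * J) := congrArg (J * ·) (eq_neg_of_add_eq_zero_left hskew)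
    _ = X₁ᵀ * J := by rw [mul_neg, ← Matrix.mul_assoc, ← Matrix.mul_assoc, hJJ, neg_one_mul,
      Matrix.neg_mul, neg_neg]
  have hJX_skew : (J * X₁)ᵀ = -(J * X₁) := by
    rw [transpose_mul, Jstd_transpose, mul_neg, hJX]
  have hJ_unit : IsUnit J.det :=
    isUnit_det_of_right_inverse (B := -J) (by rw [mul_neg, hJJ, neg_neg])
  rw [← rank_mul_eq_right_of_isUnit_det J X₁ hJ_unit]
  exact even_rank_of_transpose_eq_neg hchar hJX_skew

/-- If `X₁² = 0` and `X₁ + J X₁ᵀ J = 0`, then the rank of `X₁` is even. -/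
theorem stmt8 (k : Type*) [Field k] (hchar : (2 : k) ≠ 0) (m : ℕ) (hm : 1 ≤ m)
    (X₁ : Matrix (Fin (2 * m)) (Fin (2 * m)) k)
    (hsq : X₁ * X₁ = 0)
    (hskew : X₁ + Jstd k (2 * m) * X₁ᵀ * Jstd k (2 * m) = 0) :
    Even X₁.rank :=
  stmt8_general k hchar m X₁ hskew
end

section
/- Let A be a commutative ring, r ≥ s ≥ 0, m = (r+s-1)/2 with r+s = 2m+1 odd. Given an r×s matrix a over A, the system of equations a_{[s]} - ι(a_{[s]}) = ι((a_{[m]})^{[m-s]}) a^{[m-s]} - ι(a^{[m-s]}) (a_{[m]})^{[m-s]} (where a_{[s]} is the last s rows of a, a^{[m-s]} the first m-s rows, (a_{[m]})^{[m-s]} the first m-s rows of the last m rows, and ι(B) = H B^t H the antidiagonal reflection), with 2 invertible in A, has solution set naturally an affine space: the entries a_{i,j} with i ≤ r-s together with the entries with r-s+1 ≤ i ≤ r, 1 ≤ j ≤ r+1-i, can be chosen freely, and they uniquely determine the remaining entries. In particular over a field, the solution set is an affine space of dimension s(r-s) + s(s+1)/2. -/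
/-!
Write `ι(P) = H Pᵀ H` for the antidiagonal reflection. It is an involutive anti-automorphism,
so `ι(ι(M) T - ι(T) M) = -(ι(M) T - ι(T) M)`: the right-hand side `B` is `ι`-antisymmetric, and it
only involves the first `r - s` rows of `a`. Once these rows are chosen, the equation for the
lower `s × s` block `M` reads `M t j - M (s-1-j) (s-1-t) = B t j`. Strictly above the
antidiagonal the entries of `M` are free and determine those below; on the antidiagonal the
equation says `B t (s-1-t) = 0`, which follows from antisymmetry because `2` is a unit.
-/

open Matrix

/-- The unit antidiagonal matrix `H_s`. -/
def Hmat (A : Type*) [CommRing A] (s : ℕ) : Matrix (Fin s) (Fin s) A :=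
  Matrix.of fun i j => if (i : ℕ) + (j : ℕ) = s - 1 then 1 else 0

section

variable {A : Type*} [CommRing A]

theorem Hmat_mul_apply {a b : ℕ} (X : Matrix (Fin a) (Fin b) A) (i : Fin a) (j : Fin b) :
    (Hmat A a * X) i j = X i.rev j := by
  rw [mul_apply, Finset.sum_eq_single i.rev]
  · rw [Hmat, of_apply, if_pos (by rw [Fin.val_rev]; omega), one_mul]
  · intro k _ hk
    rw [Hmat, of_apply, if_neg fun h => hk (Fin.ext (by rw [Fin.val_rev]; omega)), zero_mul]
  · simp

theorem mul_Hmat_apply {a b : ℕ} (X : Matrix (Fin a) (Fin b) A) (i : Fin a) (j : Fin b) :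
    (X * Hmat A b) i j = X i j.rev := by
  rw [mul_apply, Finset.sum_eq_single j.rev]
  · rw [Hmat, of_apply, if_pos (by rw [Fin.val_rev]; omega), mul_one]
  · intro k _ hk
    rw [Hmat, of_apply, if_neg fun h => hk (Fin.ext (by rw [Fin.val_rev]; omega)), mul_zero]
  · simp

theorem Hmat_mul_Hmat (n : ℕ) : Hmat A n * Hmat A n = 1 := by
  ext i j
  rw [Hmat_mul_apply, Hmat, of_apply, one_apply]
  congr 1
  simp only [Fin.val_rev, Fin.ext_iff, eq_iff_iff]
  omega

def antidiagTranspose {a b : ℕ} (P : Matrix (Fin a) (Fin b) A) : Matrix (Fin b) (Fin a) A :=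
  Hmat A b * Pᵀ * Hmat A a

@[simp]
theorem antidiagTranspose_apply {a b : ℕ} (P : Matrix (Fin a) (Fin b) A) (i : Fin b)
    (j : Fin a) : antidiagTranspose P i j = P j.rev i.rev := by
  rw [antidiagTranspose, mul_Hmat_apply, Hmat_mul_apply, transpose_apply]

@[simp]
theorem antidiagTranspose_antidiagTranspose {a b : ℕ} (P : Matrix (Fin a) (Fin b) A) :
    antidiagTranspose (antidiagTranspose P) = P := by
  ext i j
  simp

theorem antidiagTranspose_sub {a b : ℕ} (P Q : Matrix (Fin a) (Fin b) A) :
    antidiagTranspose (P - Q) = antidiagTranspose P - antidiagTranspose Q := by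
  ext i j
  simp

theorem antidiagTranspose_mul {a b c : ℕ} (P : Matrix (Fin a) (Fin b) A)
    (Q : Matrix (Fin b) (Fin c) A) :
    antidiagTranspose (P * Q) = antidiagTranspose Q * antidiagTranspose P := by
  simp only [antidiagTranspose, transpose_mul, Matrix.mul_assoc]
  rw [← Matrix.mul_assoc (Hmat A b), Hmat_mul_Hmat, Matrix.one_mul]

theorem antidiagTranspose_mul_sub_mul {k s : ℕ} (T M : Matrix (Fin k) (Fin s) A) :
    antidiagTranspose (antidiagTranspose M * T - antidiagTranspose T * M) =
      -(antidiagTranspose M * T - antidiagTranspose T * M) := by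
  simp only [antidiagTranspose_sub, antidiagTranspose_mul, antidiagTranspose_antidiagTranspose,
    neg_sub]

section Square

variable {s : ℕ}

theorem eq_of_sub_antidiagTranspose_eq {M M' : Matrix (Fin s) (Fin s) A}
    (h : M - antidiagTranspose M = M' - antidiagTranspose M')
    (hfree : ∀ t j : Fin s, (t : ℕ) + j + 1 ≤ s → M t j = M' t j) : M = M' := by
  ext t j
  by_cases htj : (t : ℕ) + j + 1 ≤ s
  · exact hfree t j htj
  · have hmirror := hfree j.rev t.rev (by simp only [Fin.val_rev]; omega)
    have hentry := congrFun (congrFun h t) j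
    simp only [Matrix.sub_apply, antidiagTranspose_apply] at hentry
    linear_combination hentry + hmirror

theorem exists_sub_antidiagTranspose_eq (h2 : IsUnit (2 : A)) {B : Matrix (Fin s) (Fin s) A}
    (hB : antidiagTranspose B = -B) (f : Matrix (Fin s) (Fin s) A) :
    ∃ M : Matrix (Fin s) (Fin s) A, M - antidiagTranspose M = B ∧
      ∀ t j : Fin s, (t : ℕ) + j + 1 ≤ s → M t j = f t j := by
  have hBanti (t j : Fin s) : B j.rev t.rev = -B t j := by
    simpa using congrFun (congrFun hB t) j
  refine ⟨of fun t j => if (t : ℕ) + j + 1 ≤ s then f t j else f j.rev t.rev + B t j,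
    ?_, fun t j htj => if_pos htj⟩
  ext t j
  rcases lt_trichotomy ((t : ℕ) + j + 1) s with hlt | heq | hgt
  · simp only [Matrix.sub_apply, antidiagTranspose_apply, of_apply, Fin.rev_rev]
    rw [if_pos hlt.le, if_neg (by simp only [Fin.val_rev]; omega), hBanti]
    ring
  · obtain rfl : j = t.rev := Fin.ext (by simp only [Fin.val_rev]; omega)
    have hdiag := hBanti t t.rev
    rw [Fin.rev_rev] at hdiag
    have h2B : 2 * B t t.rev = 0 := by linear_combination hdiag
    rw [Matrix.sub_apply, antidiagTranspose_apply, Fin.rev_rev, sub_self,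
      (h2.mul_right_eq_zero).mp h2B]
  · simp only [Matrix.sub_apply, antidiagTranspose_apply, of_apply, Fin.rev_rev]
    rw [if_neg (by omega), if_pos (by simp only [Fin.val_rev]; omega)]
    ring

end Square

section Rectangular

variable {r s : ℕ} (hrs : s ≤ r)

def lowerBlock {α : Type*} (a : Matrix (Fin r) (Fin s) α) : Matrix (Fin s) (Fin s) α :=
  a.submatrix (fun t => ⟨r - s + t, by omega⟩) id

theorem lowerBlock_apply_sub {α : Type*} (a : Matrix (Fin r) (Fin s) α) {i : Fin r}
    (hi : r - s ≤ i) (j : Fin s) : lowerBlock hrs a ⟨i - (r - s), by omega⟩ j = a i j := by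
  simp only [lowerBlock, submatrix_apply, id_eq]
  congr
  omega

theorem ext_of_lowerBlock_eq {α : Type*} {a a' : Matrix (Fin r) (Fin s) α}
    (hupper : ∀ i : Fin r, (i : ℕ) < r - s → a i = a' i)
    (hlower : lowerBlock hrs a = lowerBlock hrs a') : a = a' := by
  ext i j
  by_cases hi : (i : ℕ) < r - s
  · rw [hupper i hi]
  · rw [← lowerBlock_apply_sub hrs a (not_lt.mp hi), hlower,
      lowerBlock_apply_sub hrs a' (not_lt.mp hi)]

theorem exists_lowerBlock_eq {α : Type*} (u : Matrix (Fin r) (Fin s) α)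
    (M : Matrix (Fin s) (Fin s) α) :
    ∃ a : Matrix (Fin r) (Fin s) α,
      (∀ i : Fin r, (i : ℕ) < r - s → a i = u i) ∧ lowerBlock hrs a = M := by
  refine ⟨of fun i j => if hi : (i : ℕ) < r - s then u i j else M ⟨i - (r - s), by omega⟩ j,
    fun i hi => funext fun j => dif_pos hi, ?_⟩
  ext t j
  simp only [lowerBlock, submatrix_apply, id_eq, of_apply]
  rw [dif_neg (by omega)]
  congr
  omega

theorem existsUnique_lowerBlock_sub_antidiagTranspose_eq (h2 : IsUnit (2 : A))
    (R : Matrix (Fin r) (Fin s) A → Matrix (Fin s) (Fin s) A)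
    (hR : ∀ a a' : Matrix (Fin r) (Fin s) A,
      (∀ i : Fin r, (i : ℕ) < r - s → a i = a' i) → R a = R a')
    (hR_anti : ∀ a, antidiagTranspose (R a) = -R a)
    (v : {p : Fin r × Fin s // (p.1 : ℕ) < r - s ∨ (p.1 : ℕ) + (p.2 : ℕ) + 1 ≤ r} → A) :
    ∃! a : Matrix (Fin r) (Fin s) A,
      lowerBlock hrs a - antidiagTranspose (lowerBlock hrs a) = R a ∧
        ∀ (p : Fin r × Fin s) (hp : (p.1 : ℕ) < r - s ∨ (p.1 : ℕ) + (p.2 : ℕ) + 1 ≤ r),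
          a p.1 p.2 = v ⟨p, hp⟩ := by
  let u : Matrix (Fin r) (Fin s) A := of fun i j =>
    if hp : (i : ℕ) < r - s ∨ (i : ℕ) + j + 1 ≤ r then v ⟨(i, j), hp⟩ else 0
  have hu (i : Fin r) (j : Fin s) (hp : (i : ℕ) < r - s ∨ (i : ℕ) + j + 1 ≤ r) :
      u i j = v ⟨(i, j), hp⟩ := dif_pos hp
  obtain ⟨M, hM, hMfree⟩ := exists_sub_antidiagTranspose_eq h2 (hR_anti u) (lowerBlock hrs u)
  obtain ⟨a, hupper, hlower⟩ := exists_lowerBlock_eq hrs u M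
  refine ⟨a, ⟨by rw [hlower, hM, hR a u hupper], ?_⟩, ?_⟩
  · rintro ⟨i, j⟩ hp
    dsimp only at hp ⊢
    rw [← hu i j hp]
    by_cases hi : (i : ℕ) < r - s
    · rw [hupper i hi]
    · rw [← lowerBlock_apply_sub hrs a (not_lt.mp hi), hlower, hMfree _ _ (by dsimp only; omega),
        lowerBlock_apply_sub hrs u (not_lt.mp hi)]
  · rintro a' ⟨ha'eq, ha'free⟩
    have hupper' (i : Fin r) (hi : (i : ℕ) < r - s) : a' i = a i := by
      ext j
      rw [ha'free (i, j) (Or.inl hi), hupper i hi, hu i j (Or.inl hi)]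
    refine ext_of_lowerBlock_eq hrs hupper' (eq_of_sub_antidiagTranspose_eq ?_ fun t j htj => ?_)
    · rw [ha'eq, hlower, hM, hR a' u fun i hi => (hupper' i hi).trans (hupper i hi)]
    · have hp : r - s + (t : ℕ) + j + 1 ≤ r := by omega
      rw [hlower, hMfree t j htj]
      exact (ha'free _ (Or.inr hp)).trans (hu _ j (Or.inr hp)).symm

end Rectangular

theorem sum_range_min_succ {r s : ℕ} (hrs : s ≤ r) :
    ∑ k ∈ Finset.range r, min s (k + 1) = s * (r - s) + s * (s + 1) / 2 := by
  induction r, hrs using Nat.le_induction with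
  | base =>
    have hgauss := Finset.sum_range_id_mul_two (s + 1)
    rw [Finset.sum_range_succ', add_zero, Nat.add_sub_cancel, mul_comm (s + 1)] at hgauss
    rw [Finset.sum_congr rfl fun k hk => min_eq_right (Finset.mem_range.mp hk), Nat.sub_self,
      mul_zero, zero_add]
    omega
  | succ r hsr ih =>
    rw [Finset.sum_range_succ, ih, min_eq_left (by omega), Nat.sub_add_comm hsr, mul_add_one]
    ring

theorem card_free_entries {r s : ℕ} (hrs : s ≤ r) :
    Nat.card {p : Fin r × Fin s // (p.1 : ℕ) < r - s ∨ (p.1 : ℕ) + (p.2 : ℕ) + 1 ≤ r}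
      = s * (r - s) + s * (s + 1) / 2 := by
  have hrow (i : Fin r) :
      (Finset.univ.filter fun j : Fin s => (i : ℕ) < r - s ∨ (i : ℕ) + j + 1 ≤ r).card
        = min s (r - i) := by
    rw [← Fin.card_filter_val_lt]
    congr 1
    ext j
    simp only [Finset.mem_filter, Finset.mem_univ, true_and]
    omega
  rw [Nat.card_eq_fintype_card, Fintype.card_subtype, Finset.card_filter,
    Fintype.sum_prod_type]
  simp only [← Finset.card_filter, hrow]
  rw [← Equiv.sum_comp Fin.revPerm]
  calc ∑ i : Fin r, min s (r - (Fin.revPerm i : ℕ))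
      = ∑ i : Fin r, min s ((i : ℕ) + 1) := by
        refine Finset.sum_congr rfl fun i _ => ?_
        rw [Fin.revPerm_apply, Fin.val_rev]
        congr 1
        omega
    _ = s * (r - s) + s * (s + 1) / 2 := by
        rw [Fin.sum_univ_eq_sum_range (fun k => min s (k + 1)), sum_range_min_succ hrs]

end

/-- The odd case `r + s = 2m + 1`: the solutions of the matrix equation
`a_{[s]} - ι(a_{[s]}) = ι((a_{[m]})^{[m-s]}) a^{[m-s]} - ι(a^{[m-s]}) (a_{[m]})^{[m-s]}`
form an affine space: the entries `a_{i,j}` with `i ≤ r - s` (1-indexed) together with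
those with `r-s+1 ≤ i ≤ r`, `1 ≤ j ≤ r+1-i` can be chosen freely and uniquely determine
the remaining entries; the number of free entries is `s(r-s) + s(s+1)/2`. -/
theorem stmt16 (A : Type*) [CommRing A] (r s m : ℕ) (hrs : s ≤ r)
    (hodd : r + s = 2 * m + 1) (h2 : IsUnit (2 : A)) :
    (∀ v : {p : Fin r × Fin s // (p.1 : ℕ) < r - s ∨ (p.1 : ℕ) + (p.2 : ℕ) + 1 ≤ r} → A,
      ∃! a : Matrix (Fin r) (Fin s) A,
        (let aS := a.submatrix
            (fun t : Fin s => (⟨r - s + (t : ℕ), by have := t.isLt; omega⟩ : Fin r)) id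
         let aT := a.submatrix
            (fun t : Fin (m - s) => (⟨(t : ℕ), by have := t.isLt; omega⟩ : Fin r)) id
         let aM := a.submatrix
            (fun t : Fin (m - s) => (⟨r - m + (t : ℕ), by have := t.isLt; omega⟩ : Fin r)) id
         aS - Hmat A s * aSᵀ * Hmat A s =
           (Hmat A s * aMᵀ * Hmat A (m - s)) * aT
             - (Hmat A s * aTᵀ * Hmat A (m - s)) * aM) ∧
        ∀ (p : Fin r × Fin s) (hp : (p.1 : ℕ) < r - s ∨ (p.1 : ℕ) + (p.2 : ℕ) + 1 ≤ r),
          a p.1 p.2 = v ⟨p, hp⟩) ∧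
    Nat.card {p : Fin r × Fin s // (p.1 : ℕ) < r - s ∨ (p.1 : ℕ) + (p.2 : ℕ) + 1 ≤ r}
      = s * (r - s) + s * (s + 1) / 2 := by
  -- the row ranges `0, …, m-s-1` and `r-m, …, r-s-1` both lie in the first `r - s` rows
  let top : Fin (m - s) → Fin r := fun t => ⟨t, by omega⟩
  let mid : Fin (m - s) → Fin r := fun t => ⟨r - m + t, by omega⟩
  have hrows (a a' : Matrix (Fin r) (Fin s) A) (h : ∀ i : Fin r, (i : ℕ) < r - s → a i = a' i)
      (e : Fin (m - s) → Fin r) (he : ∀ t, (e t : ℕ) < r - s) :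
      a.submatrix e id = a'.submatrix e id :=
    funext fun t => h (e t) (he t)
  have htop : ∀ t, (top t : ℕ) < r - s := fun t => by dsimp only [top]; omega
  have hmid : ∀ t, (mid t : ℕ) < r - s := fun t => by dsimp only [mid]; omega
  refine ⟨fun v => existsUnique_lowerBlock_sub_antidiagTranspose_eq hrs h2
    (fun a => antidiagTranspose (a.submatrix mid id) * a.submatrix top id
      - antidiagTranspose (a.submatrix top id) * a.submatrix mid id)
    (fun a a' h => by rw [hrows a a' h top htop, hrows a a' h mid hmid])
    (fun a => antidiagTranspose_mul_sub_mul _ _) v, card_free_entries hrs⟩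
end
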